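/- Let Ω(s,t) = (K̃^{1/2} C K̃^{1/2})(s,t) with spectral decomposition Ω = Σ_ν ρ̃_ν ψ̃_ν ⊗ ψ̃_ν where ρ̃_ν ∈ (0,1]. Define φ*_ν = ρ̃_ν^{−1/2} K̃^{1/2} ψ̃_ν and ρ*_ν = ρ̃_ν^{−1} − 1. Then the functions φ*_ν satisfy ⟨C φ*_μ, φ*_ν⟩ = δ_{μν} and J(φ*_μ, φ*_ν) = ρ*_ν δ_{μν}, i.e., they are simultaneously orthonormal with respect to ⟨C·,·⟩ and orthogonal with respect to the penalty J. -/
import Mathlib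


open scoped InnerProductSpace

/-- let Ω = K̃^{1/2} C K̃^{1/2} have eigen-system (ρ̃_ν, ψ̃_ν) with
ρ̃_ν ∈ (0,1], and set φ*_ν = ρ̃_ν^{−1/2} K̃^{1/2} ψ̃_ν, ρ*_ν = ρ̃_ν^{−1} − 1.  Then
⟨C φ*_μ, φ*_ν⟩ = δ_{μν} and J(φ*_μ, φ*_ν) = ρ*_ν δ_{μν}: the φ*_ν are simultaneously
orthonormal for ⟨C·,·⟩ and orthogonal for the penalty J. -/
theorem simultaneous_diagonalization
    {E : Type*} [NormedAddCommGroup E] [InnerProductSpace ℝ E]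
    (Khalf Cop : E →L[ℝ] E)
    (hKhalf_sa : ∀ x y : E, ⟪Khalf x, y⟫_ℝ = ⟪x, Khalf y⟫_ℝ)
    (hCop_sa : ∀ x y : E, ⟪Cop x, y⟫_ℝ = ⟪x, Cop y⟫_ℝ)
    (J : E → E → ℝ)
    -- the K̃-inner product of K̃^{1/2}x and K̃^{1/2}y equals ⟨x,y⟩:
    -- ‖β‖²_K̃ = ⟨Cβ,β⟩ + J(β,β) with K̃ the reproducing kernel of this norm
    (hJ : ∀ x y : E, ⟪Cop (Khalf x), Khalf y⟫_ℝ + J (Khalf x) (Khalf y) = ⟪x, y⟫_ℝ)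
    (ρt : ℕ → ℝ) (ψt : ℕ → E)
    (hρ : ∀ ν, ρt ν ∈ Set.Ioc (0 : ℝ) 1)
    (hON : Orthonormal ℝ ψt)
    (heig : ∀ ν, Khalf (Cop (Khalf (ψt ν))) = ρt ν • ψt ν)
    (φ : ℕ → E) (hφ : ∀ ν, φ ν = (ρt ν) ^ (-(1/2) : ℝ) • Khalf (ψt ν))
    (ρstar : ℕ → ℝ) (hρstar : ∀ ν, ρstar ν = (ρt ν)⁻¹ - 1) :
    (∀ μ ν, ⟪Cop (φ μ), φ ν⟫_ℝ = if μ = ν then 1 else 0) ∧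
    (∀ μ ν, J (φ μ) (φ ν) = if μ = ν then ρstar ν else 0) := by
  have hpos : ∀ ν, 0 < ρt ν := fun ν => (hρ ν).1
  -- c ν squared
  have hc2 : ∀ ν, (ρt ν) ^ (-(1/2) : ℝ) * (ρt ν) ^ (-(1/2) : ℝ) = (ρt ν)⁻¹ := by
    intro ν
    rw [← Real.rpow_add (hpos ν)]
    norm_num
    exact Real.rpow_neg_one _
  -- key inner product
  have key : ∀ μ ν, ⟪Cop (Khalf (ψt μ)), Khalf (ψt ν)⟫_ℝ
      = ρt μ * (if μ = ν then 1 else 0) := by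
    intro μ ν
    rw [← hKhalf_sa (Cop (Khalf (ψt μ))) (ψt ν), heig μ, real_inner_smul_left]
    rw [orthonormal_iff_ite.mp hON]
  -- φ as image of Khalf
  have hφ' : ∀ ν, φ ν = Khalf ((ρt ν) ^ (-(1/2) : ℝ) • ψt ν) := by
    intro ν; rw [hφ ν, map_smul]
  have keyφ : ∀ μ ν, ⟪Cop (φ μ), φ ν⟫_ℝ = if μ = ν then 1 else 0 := by
    intro μ ν
    rw [hφ μ, hφ ν, map_smul, real_inner_smul_left, real_inner_smul_right, key]
    by_cases h : μ = ν
    · subst h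
      simp only [eq_self_iff_true, if_true]
      rw [mul_one, ← mul_assoc, hc2 μ, inv_mul_cancel₀ (hpos μ).ne']
    · simp [h]
  refine ⟨keyφ, fun μ ν => ?_⟩
  have hJ' := hJ ((ρt μ) ^ (-(1/2) : ℝ) • ψt μ) ((ρt ν) ^ (-(1/2) : ℝ) • ψt ν)
  rw [← hφ' μ, ← hφ' ν] at hJ'
  have : J (φ μ) (φ ν)
      = ⟪(ρt μ) ^ (-(1/2) : ℝ) • ψt μ, (ρt ν) ^ (-(1/2) : ℝ) • ψt ν⟫_ℝ
        - ⟪Cop (φ μ), φ ν⟫_ℝ := by linarith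
  rw [this, keyφ, real_inner_smul_left, real_inner_smul_right,
    orthonormal_iff_ite.mp hON]
  by_cases h : μ = ν
  · subst h
    simp only [eq_self_iff_true, if_true]
    rw [mul_one, hc2 μ, hρstar]
  · simp [h]
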